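/- There is an infinite, binary branching computable tree T that has no infinite computably enumerable chain and no infinite computably enumerable antichain. -/

import Mathlib

/-- `m` is an immediate successor of `n` with respect to the tree order `r`. -/
def ImmSucc (r : ℕ → ℕ → Prop) (n m : ℕ) : Prop :=
  r n m ∧ n ≠ m ∧ ∀ k, r n k → r k m → k = n ∨ k = m

namespace S17

open Nat.Partrec (Code)
open Nat.Partrec.Code

abbrev Ent : Type := ℕ × ℕ × ℕ
abbrev St : Type := List ℕ × List Ent

def pf (P : List ℕ) (k : ℕ) : ℕ := P.getD k 0

def rp (P : List ℕ) (n m : ℕ) : Bool :=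
  !(((List.range (m+1)).filter (fun k => (pf P)^[k] m == n)).isEmpty)

def cone (P : List ℕ) (b : ℕ) : List ℕ := (List.range P.length).filter (fun m => rp P b m)

def mx (P : List ℕ) (b : ℕ) : ℕ := (cone P b).foldr max 0

def sib (P : List ℕ) (x : ℕ) : List ℕ :=
  (List.range P.length).filter (fun c => !(c == 0) && !(c == x) && (pf P c == pf P x))

def fb (L : List Ent) : ℕ := ((L.reverse).headD ((0:ℕ),(0:ℕ),(0:ℕ))).2.2

def bs (L : List Ent) (i : ℕ) : ℕ := fb (L.filter (fun t => decide (t.1 < i)))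

def hasIdx (L : List Ent) (i : ℕ) : Bool := !((L.filter (fun t => t.1 == i)).isEmpty)

def wOK (s : ℕ) (P : List ℕ) (L : List Ent) (i x : ℕ) : Bool :=
  (evaln s (Denumerable.ofNat Code (i/2)) x).isSome && rp P (bs L i) x &&
    (i % 2 == 1 || !(x == bs L i))

def elig (s : ℕ) (P : List ℕ) (L : List Ent) (i : ℕ) : Option ℕ :=
  bif hasIdx L i then none else ((List.range s).filter (wOK s P L i)).head?

def act (s : ℕ) (P : List ℕ) (L : List Ent) : Option (ℕ × ℕ) :=
  ((List.range s).filterMap (fun i => (elig s P L i).map fun x => (i, x))).head?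

def step (s : ℕ) (σ : St) : St :=
  match act s σ.1 σ.2 with
  | none => (σ.1 ++ [mx σ.1 (fb σ.2)], σ.2)
  | some (i, x) =>
    let L' := σ.2.filter (fun t => decide (t.1 < i))
    if i % 2 = 1 then (σ.1 ++ [mx σ.1 x], L' ++ [(i, x, x)])
    else
      match (sib σ.1 x).head? with
      | some c => (σ.1 ++ [mx σ.1 c], L' ++ [(i, x, c)])
      | none => (σ.1 ++ [pf σ.1 x], L' ++ [(i, x, σ.1.length)])

def st : ℕ → St := fun s => Nat.rec (([0], []) : St) (fun n σ => step (n+1) σ) s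

def par (k : ℕ) : ℕ := pf (st k).1 k

def R (n m : ℕ) : Prop := ∃ k, par^[k] m = n


section Prim

open Primrec

variable {α : Type*} {β : Type*} [Primcodable α] [Primcodable β]

theorem pr_filter {f : α → List β} {p : α → β → Bool} (hf : Primrec f) (hp : Primrec₂ p) :
    Primrec fun a => (f a).filter (p a) := by
  have : ∀ (q : β → Bool) (l : List β),
      l.filter q = l.filterMap fun b => bif q b then some b else none := by
    intro q l; induction l with
    | nil => rfl
    | cons b l ih => cases h : q b <;> simp [List.filter, List.filterMap, h, ih]
  exact (Primrec.listFilterMap hf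
    ((Primrec.cond hp (Primrec.option_some.comp Primrec₂.right) (Primrec.const none)).to₂ :
      Primrec₂ fun a b => bif p a b then some b else none)).of_eq
    fun a => (this (p a) (f a)).symm

theorem pr_isEmpty {f : α → List β} (hf : Primrec f) :
    Primrec fun a => (f a).isEmpty :=
  (Primrec.beq.comp (Primrec.list_length.comp hf) (Primrec.const 0)).of_eq
    fun a => by cases f a <;> simp

theorem pr_headD {f : α → List β} {d : α → β} (hf : Primrec f) (hd : Primrec d) :
    Primrec fun a => (f a).headD (d a) :=
  (Primrec.option_getD.comp (Primrec.list_head?.comp hf) hd).of_eq fun a => by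
    cases f a <;> simp

theorem pr_pf {f : α → List ℕ} {k : α → ℕ} (hf : Primrec f) (hk : Primrec k) :
    Primrec fun a => pf (f a) (k a) :=
  (Primrec.list_getD 0).comp hf hk

theorem pr_not : Primrec Bool.not := Primrec.dom_finite _

theorem pr_and : Primrec₂ (fun a b : Bool => a && b) :=
  (Primrec.dom_finite (fun p : Bool × Bool => p.1 && p.2)).to₂

theorem pr_or : Primrec₂ (fun a b : Bool => a || b) :=
  (Primrec.dom_finite (fun p : Bool × Bool => p.1 || p.2)).to₂

theorem pr_rp {P : α → List ℕ} {n m : α → ℕ} (hP : Primrec P) (hn : Primrec n)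
    (hm : Primrec m) : Primrec fun a => rp (P a) (n a) (m a) := by
  have hiter : Primrec fun p : α × ℕ => (pf (P p.1))^[p.2] (m p.1) :=
    Primrec.nat_iterate (f := fun p : α × ℕ => p.2) (g := fun p : α × ℕ => m p.1)
      (h := fun (p : α × ℕ) (v : ℕ) => pf (P p.1) v)
      Primrec.snd (hm.comp Primrec.fst)
      (pr_pf (hP.comp (Primrec.fst.comp Primrec.fst)) Primrec.snd).to₂
  have hpred : Primrec fun p : α × ℕ => ((pf (P p.1))^[p.2] (m p.1) == n p.1) :=
    Primrec.beq.comp hiter (hn.comp Primrec.fst)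
  exact pr_not.comp (pr_isEmpty (pr_filter
    (Primrec.list_range.comp (Primrec.succ.comp hm)) hpred.to₂))

theorem pr_cone {P : α → List ℕ} {b : α → ℕ} (hP : Primrec P) (hb : Primrec b) :
    Primrec fun a => cone (P a) (b a) :=
  pr_filter (Primrec.list_range.comp (Primrec.list_length.comp hP))
    (pr_rp (hP.comp Primrec.fst) (hb.comp Primrec.fst) Primrec.snd).to₂

theorem pr_mx {P : α → List ℕ} {b : α → ℕ} (hP : Primrec P) (hb : Primrec b) :
    Primrec fun a => mx (P a) (b a) :=
  Primrec.list_foldr (pr_cone hP hb) (Primrec.const 0)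
    ((Primrec.nat_max.comp (Primrec.fst.comp Primrec.snd)
      (Primrec.snd.comp Primrec.snd)).to₂)

theorem pr_sib {P : α → List ℕ} {x : α → ℕ} (hP : Primrec P) (hx : Primrec x) :
    Primrec fun a => sib (P a) (x a) := by
  refine pr_filter (Primrec.list_range.comp (Primrec.list_length.comp hP)) ?_
  have h1 : Primrec fun p : α × ℕ => !(p.2 == 0) :=
    pr_not.comp (Primrec.beq.comp Primrec.snd (Primrec.const 0))
  have h2 : Primrec fun p : α × ℕ => !(p.2 == x p.1) :=
    pr_not.comp (Primrec.beq.comp Primrec.snd (hx.comp Primrec.fst))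
  have h3 : Primrec fun p : α × ℕ => (pf (P p.1) p.2 == pf (P p.1) (x p.1)) :=
    Primrec.beq.comp (pr_pf (hP.comp Primrec.fst) Primrec.snd)
      (pr_pf (hP.comp Primrec.fst) (hx.comp Primrec.fst))
  exact (pr_and.comp (pr_and.comp h1 h2) h3).to₂

theorem pr_fb {L : α → List Ent} (hL : Primrec L) : Primrec fun a => fb (L a) :=
  Primrec.snd.comp (Primrec.snd.comp
    (pr_headD (Primrec.list_reverse.comp hL) (Primrec.const ((0:ℕ),(0:ℕ),(0:ℕ)))))

theorem pr_bs {L : α → List Ent} {i : α → ℕ} (hL : Primrec L) (hi : Primrec i) :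
    Primrec fun a => bs (L a) (i a) :=
  pr_fb (pr_filter hL (Primrec.nat_lt.comp (Primrec.fst.comp Primrec.snd)
    (hi.comp Primrec.fst)).decide.to₂)

theorem pr_hasIdx {L : α → List Ent} {i : α → ℕ} (hL : Primrec L) (hi : Primrec i) :
    Primrec fun a => hasIdx (L a) (i a) :=
  pr_not.comp (pr_isEmpty (pr_filter hL
    (Primrec.beq.comp (Primrec.fst.comp Primrec.snd) (hi.comp Primrec.fst)).to₂))

theorem pr_wOK {s : α → ℕ} {P : α → List ℕ} {L : α → List Ent} {i x : α → ℕ}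
    (hs : Primrec s) (hP : Primrec P) (hL : Primrec L) (hi : Primrec i) (hx : Primrec x) :
    Primrec fun a => wOK (s a) (P a) (L a) (i a) (x a) := by
  have h1 : Primrec fun a => (evaln (s a) (Denumerable.ofNat Code ((i a)/2)) (x a)).isSome :=
    Primrec.option_isSome.comp (primrec_evaln.comp
      ((hs.pair ((Primrec.ofNat Code).comp (Primrec.nat_div.comp hi (Primrec.const 2)))).pair hx))
  have h2 : Primrec fun a => rp (P a) (bs (L a) (i a)) (x a) :=
    pr_rp hP (pr_bs hL hi) hx
  have h3 : Primrec fun a => ((i a) % 2 == 1 || !(x a == bs (L a) (i a))) :=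
    pr_or.comp (Primrec.beq.comp (Primrec.nat_mod.comp hi (Primrec.const 2)) (Primrec.const 1))
      (pr_not.comp (Primrec.beq.comp hx (pr_bs hL hi)))
  exact pr_and.comp (pr_and.comp h1 h2) h3

theorem pr_elig {s : α → ℕ} {P : α → List ℕ} {L : α → List Ent} {i : α → ℕ}
    (hs : Primrec s) (hP : Primrec P) (hL : Primrec L) (hi : Primrec i) :
    Primrec fun a => elig (s a) (P a) (L a) (i a) :=
  Primrec.cond (pr_hasIdx hL hi) (Primrec.const none)
    (Primrec.list_head?.comp (pr_filter (Primrec.list_range.comp hs)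
      (pr_wOK (hs.comp Primrec.fst) (hP.comp Primrec.fst) (hL.comp Primrec.fst)
        (hi.comp Primrec.fst) Primrec.snd).to₂))

theorem pr_act {s : α → ℕ} {P : α → List ℕ} {L : α → List Ent}
    (hs : Primrec s) (hP : Primrec P) (hL : Primrec L) :
    Primrec fun a => act (s a) (P a) (L a) :=
  Primrec.list_head?.comp (Primrec.listFilterMap (Primrec.list_range.comp hs)
    (Primrec.option_map
      (pr_elig (hs.comp Primrec.fst) (hP.comp Primrec.fst) (hL.comp Primrec.fst) Primrec.snd)
      ((Primrec.snd.comp Primrec.fst).pair Primrec.snd).to₂))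

theorem pr_step : Primrec fun q : ℕ × St => step q.1 q.2 := by
  have hs : Primrec fun q : ℕ × St => q.1 := Primrec.fst
  have hP : Primrec fun q : ℕ × St => q.2.1 := Primrec.fst.comp Primrec.snd
  have hL : Primrec fun q : ℕ × St => q.2.2 := Primrec.snd.comp Primrec.snd
  -- the some-branch, over pairs p : (ℕ × St) × (ℕ × ℕ)
  have hP' : Primrec fun p : (ℕ × St) × (ℕ × ℕ) => p.1.2.1 :=
    Primrec.fst.comp (Primrec.snd.comp Primrec.fst)
  have hL' : Primrec fun p : (ℕ × St) × (ℕ × ℕ) => p.1.2.2 :=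
    Primrec.snd.comp (Primrec.snd.comp Primrec.fst)
  have hi : Primrec fun p : (ℕ × St) × (ℕ × ℕ) => p.2.1 := Primrec.fst.comp Primrec.snd
  have hx : Primrec fun p : (ℕ × St) × (ℕ × ℕ) => p.2.2 := Primrec.snd.comp Primrec.snd
  have hF : Primrec fun p : (ℕ × St) × (ℕ × ℕ) =>
      p.1.2.2.filter (fun t => decide (t.1 < p.2.1)) :=
    pr_filter hL' (Primrec.nat_lt.comp (Primrec.fst.comp Primrec.snd) (hi.comp Primrec.fst)).decide.to₂
  have hodd : Primrec fun p : (ℕ × St) × (ℕ × ℕ) =>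
      ((p.1.2.1 ++ [mx p.1.2.1 p.2.2],
        p.1.2.2.filter (fun t => decide (t.1 < p.2.1)) ++ [(p.2.1, p.2.2, p.2.2)]) : St) :=
    (Primrec.list_concat.comp hP' (pr_mx hP' hx)).pair
      (Primrec.list_concat.comp hF (hi.pair (hx.pair hx)))
  -- innermost some-branch, over pairs r : ((ℕ × St) × (ℕ × ℕ)) × ℕ
  have hP'' : Primrec fun r : ((ℕ × St) × (ℕ × ℕ)) × ℕ => r.1.1.2.1 := hP'.comp Primrec.fst
  have hi'' : Primrec fun r : ((ℕ × St) × (ℕ × ℕ)) × ℕ => r.1.2.1 := hi.comp Primrec.fst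
  have hx'' : Primrec fun r : ((ℕ × St) × (ℕ × ℕ)) × ℕ => r.1.2.2 := hx.comp Primrec.fst
  have hc : Primrec fun r : ((ℕ × St) × (ℕ × ℕ)) × ℕ => r.2 := Primrec.snd
  have hF'' : Primrec fun r : ((ℕ × St) × (ℕ × ℕ)) × ℕ =>
      r.1.1.2.2.filter (fun t => decide (t.1 < r.1.2.1)) := hF.comp Primrec.fst
  have hinner : Primrec fun r : ((ℕ × St) × (ℕ × ℕ)) × ℕ =>
      ((r.1.1.2.1 ++ [mx r.1.1.2.1 r.2],
        r.1.1.2.2.filter (fun t => decide (t.1 < r.1.2.1)) ++ [(r.1.2.1, r.1.2.2, r.2)]) : St) :=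
    (Primrec.list_concat.comp hP'' (pr_mx hP'' hc)).pair
      (Primrec.list_concat.comp hF'' (hi''.pair (hx''.pair hc)))
  have heven : Primrec fun p : (ℕ × St) × (ℕ × ℕ) =>
      (Option.casesOn ((sib p.1.2.1 p.2.2).head?)
        ((p.1.2.1 ++ [pf p.1.2.1 p.2.2],
          p.1.2.2.filter (fun t => decide (t.1 < p.2.1)) ++
            [(p.2.1, p.2.2, p.1.2.1.length)]) : St)
        (fun c =>
          ((p.1.2.1 ++ [mx p.1.2.1 c],
            p.1.2.2.filter (fun t => decide (t.1 < p.2.1)) ++ [(p.2.1, p.2.2, c)]) : St)) : St) :=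
    Primrec.option_casesOn (Primrec.list_head?.comp (pr_sib hP' hx))
      ((Primrec.list_concat.comp hP' (pr_pf hP' hx)).pair
        (Primrec.list_concat.comp hF (hi.pair (hx.pair (Primrec.list_length.comp hP')))))
      hinner.to₂
  have hsome : Primrec fun p : (ℕ × St) × (ℕ × ℕ) =>
      (if p.2.1 % 2 = 1 then
        ((p.1.2.1 ++ [mx p.1.2.1 p.2.2],
          p.1.2.2.filter (fun t => decide (t.1 < p.2.1)) ++ [(p.2.1, p.2.2, p.2.2)]) : St)
      else
        (Option.casesOn ((sib p.1.2.1 p.2.2).head?)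
          ((p.1.2.1 ++ [pf p.1.2.1 p.2.2],
            p.1.2.2.filter (fun t => decide (t.1 < p.2.1)) ++
              [(p.2.1, p.2.2, p.1.2.1.length)]) : St)
          (fun c =>
            ((p.1.2.1 ++ [mx p.1.2.1 c],
              p.1.2.2.filter (fun t => decide (t.1 < p.2.1)) ++ [(p.2.1, p.2.2, c)]) : St)))) :=
    Primrec.ite (PrimrecRel.comp Primrec.eq
      (Primrec.nat_mod.comp hi (Primrec.const 2)) (Primrec.const 1)) hodd heven
  have H : Primrec fun q : ℕ × St =>
      (Option.casesOn (act q.1 q.2.1 q.2.2)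
        ((q.2.1 ++ [mx q.2.1 (fb q.2.2)], q.2.2) : St)
        (fun ix =>
          if ix.1 % 2 = 1 then
            ((q.2.1 ++ [mx q.2.1 ix.2],
              q.2.2.filter (fun t => decide (t.1 < ix.1)) ++ [(ix.1, ix.2, ix.2)]) : St)
          else
            (Option.casesOn ((sib q.2.1 ix.2).head?)
              ((q.2.1 ++ [pf q.2.1 ix.2],
                q.2.2.filter (fun t => decide (t.1 < ix.1)) ++
                  [(ix.1, ix.2, q.2.1.length)]) : St)
              (fun c =>
                ((q.2.1 ++ [mx q.2.1 c],
                  q.2.2.filter (fun t => decide (t.1 < ix.1)) ++ [(ix.1, ix.2, c)]) : St)))) : St) :=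
    Primrec.option_casesOn (pr_act hs hP hL)
      ((Primrec.list_concat.comp hP (pr_mx hP (pr_fb hL))).pair hL) hsome.to₂
  refine H.of_eq fun q => ?_
  rcases h : act q.1 q.2.1 q.2.2 with _ | ⟨i, x⟩ <;> simp only [step, h]
  by_cases hp : i % 2 = 1 <;> simp only [hp, if_true, if_false]
  rcases hh : (sib q.2.1 x).head? with _ | c <;> simp [hh]

theorem pr_st : Primrec st := by
  have : Primrec₂ fun (n : ℕ) (σ : St) => step (n+1) σ :=
    (pr_step.comp ((Primrec.succ.comp Primrec.fst).pair Primrec.snd)).to₂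
  exact Primrec.nat_rec₁ _ this

theorem pr_par : Primrec par :=
  pr_pf (Primrec.fst.comp pr_st) Primrec.id

theorem pr_Rdec : Primrec fun p : ℕ × ℕ => rp (st p.2).1 p.1 p.2 :=
  pr_rp (Primrec.fst.comp (pr_st.comp Primrec.snd)) Primrec.fst Primrec.snd

end Prim


/-! ### Basic structural facts -/

theorem st_succ (n : ℕ) : st (n+1) = step (n+1) (st n) := rfl

theorem elig_some {s : ℕ} {P : List ℕ} {L : List Ent} {i x : ℕ}
    (h : elig s P L i = some x) :
    hasIdx L i = false ∧ x < s ∧ wOK s P L i x = true := by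
  unfold elig at h
  cases hI : hasIdx L i <;> rw [hI] at h
  · have hx := List.mem_of_mem_head? h
    have := List.mem_filter.1 hx
    exact ⟨rfl, List.mem_range.1 this.1, this.2⟩
  · simp at h

theorem head?_append {l l' : List α} :
    (l ++ l').head? = l.head?.orElse (fun _ => l'.head?) := by
  cases l <;> rfl

theorem range_filterMap_head {β : Type*} {f : ℕ → Option β} {s : ℕ} {b : β}
    (h : ((List.range s).filterMap f).head? = some b) :
    ∃ i, i < s ∧ f i = some b ∧ ∀ j < i, f j = none := by
  induction s with
  | zero => simp at h
  | succ s ih =>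
    rw [List.range_succ, List.filterMap_append, head?_append] at h
    cases hA : ((List.range s).filterMap f).head? with
    | some b' =>
      rw [hA] at h
      simp at h
      subst h
      rcases ih hA with ⟨i, hi, hfi, hmin⟩
      exact ⟨i, Nat.lt_succ_of_lt hi, hfi, hmin⟩
    | none =>
      rw [hA] at h
      have hAnil : (List.range s).filterMap f = [] := List.head?_eq_none_iff.1 hA
      have hnone : ∀ j < s, f j = none := by
        intro j hj
        have := List.filterMap_eq_nil_iff.1 hAnil
        cases hfj : f j with
        | none => rfl
        | some y =>
          exact absurd (hfj ▸ this j (List.mem_range.2 hj)) (by simp)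
      have hfs : f s = some b := by
        simp only [Option.orElse] at h
        cases hfs : f s with
        | none => simp [List.filterMap, hfs] at h
        | some y => simp [List.filterMap, hfs] at h; rw [h]
      exact ⟨s, Nat.lt_succ_self s, hfs, hnone⟩

theorem act_some {s : ℕ} {P : List ℕ} {L : List Ent} {i x : ℕ}
    (h : act s P L = some (i, x)) :
    i < s ∧ elig s P L i = some x ∧ ∀ j < i, elig s P L j = none := by
  rcases range_filterMap_head h with ⟨i', hi', hf, hmin⟩
  rcases Option.map_eq_some_iff.1 hf with ⟨y, hy, hyx⟩
  cases hyx
  refine ⟨hi', hy, fun j hj => ?_⟩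
  have := hmin j hj
  cases he : elig s P L j
  · rfl
  · rw [he] at this; simp at this

theorem act_of_elig {s : ℕ} {P : List ℕ} {L : List Ent} {i x : ℕ}
    (h : elig s P L i = some x) (hi : i < s) :
    ∃ i' x', act s P L = some (i', x') ∧ i' ≤ i := by
  have hmem : (i, x) ∈ (List.range s).filterMap fun j => (elig s P L j).map fun y => (j, y) :=
    List.mem_filterMap.2 ⟨i, List.mem_range.2 hi, by rw [h]; rfl⟩
  have hne : (List.range s).filterMap (fun j => (elig s P L j).map fun y => (j, y)) ≠ [] :=
    fun hnil => by simp [hnil] at hmem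
  cases hhd : ((List.range s).filterMap fun j => (elig s P L j).map fun y => (j, y)).head? with
  | none => exact absurd (List.head?_eq_none_iff.1 hhd) hne
  | some p =>
    rcases p with ⟨i', x'⟩
    refine ⟨i', x', hhd, ?_⟩
    rcases act_some hhd with ⟨_, _, hmin⟩
    by_contra hlt
    push_neg at hlt
    have := hmin i hlt
    rw [this] at h; simp at h

/-- The four shapes of a step. -/
theorem step_none {s : ℕ} {σ : St} (h : act s σ.1 σ.2 = none) :
    step s σ = (σ.1 ++ [mx σ.1 (fb σ.2)], σ.2) := by
  unfold step; rw [h]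

theorem step_odd {s : ℕ} {σ : St} {i x : ℕ} (h : act s σ.1 σ.2 = some (i, x))
    (hp : i % 2 = 1) :
    step s σ = (σ.1 ++ [mx σ.1 x], σ.2.filter (fun t => decide (t.1 < i)) ++ [(i, x, x)]) := by
  unfold step; rw [h]; simp [hp]

theorem step_even_some {s : ℕ} {σ : St} {i x c : ℕ} (h : act s σ.1 σ.2 = some (i, x))
    (hp : i % 2 ≠ 1) (hc : (sib σ.1 x).head? = some c) :
    step s σ = (σ.1 ++ [mx σ.1 c], σ.2.filter (fun t => decide (t.1 < i)) ++ [(i, x, c)]) := by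
  unfold step; rw [h]; simp [hp, hc]

theorem step_even_none {s : ℕ} {σ : St} {i x : ℕ} (h : act s σ.1 σ.2 = some (i, x))
    (hp : i % 2 ≠ 1) (hc : (sib σ.1 x).head? = none) :
    step s σ = (σ.1 ++ [pf σ.1 x],
      σ.2.filter (fun t => decide (t.1 < i)) ++ [(i, x, σ.1.length)]) := by
  unfold step; rw [h]; simp [hp, hc]

/-! ### max-fold lemmas -/

theorem le_foldr_max {l : List ℕ} {x : ℕ} (h : x ∈ l) : x ≤ l.foldr max 0 := by
  induction l with
  | nil => simp at h
  | cons a l ih =>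
    rcases List.mem_cons.1 h with rfl | h'
    · exact le_max_left _ _
    · exact le_trans (ih h') (le_max_right _ _)

theorem foldr_max_mem {l : List ℕ} (h : l ≠ []) : l.foldr max 0 ∈ l := by
  induction l with
  | nil => exact absurd rfl h
  | cons a l ih =>
    cases l with
    | nil => simp
    | cons b l' =>
      rcases max_choice a ((b :: l').foldr max 0) with h' | h'
      · simp only [List.foldr_cons] at h' ⊢; rw [h']; exact List.mem_cons_self
      · simp only [List.foldr_cons] at h' ⊢; rw [h']
        exact List.mem_cons_of_mem _ (ih (by simp))

theorem foldr_max_lt {l : List ℕ} {n : ℕ} (h : ∀ x ∈ l, x < n) (h0 : 0 < n) :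
    l.foldr max 0 < n := by
  induction l with
  | nil => simpa
  | cons a l ih =>
    simp only [List.foldr_cons]
    exact max_lt (h a List.mem_cons_self) (ih fun x hx => h x (List.mem_cons_of_mem _ hx))

/-! ### Length and parent bounds -/

theorem getD_snoc {l : List ℕ} {v : ℕ} : (l ++ [v]).getD l.length 0 = v := by
  simp [List.getD_append_right, Nat.sub_self]

theorem getD_snoc_lt {l : List ℕ} {v k : ℕ} (h : k < l.length) :
    (l ++ [v]).getD k 0 = l.getD k 0 := List.getD_append _ _ _ _ h

theorem mx_lt {P : List ℕ} {b : ℕ} (h : 0 < P.length) : mx P b < P.length := by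
  refine foldr_max_lt (fun x hx => ?_) h
  exact List.mem_range.1 (List.mem_of_mem_filter hx)

theorem st_snoc (s : ℕ) : ∃ v, (st (s+1)).1 = (st s).1 ++ [v] := by
  rcases h : act (s+1) (st s).1 (st s).2 with _ | ⟨i, x⟩
  · exact ⟨_, by rw [st_succ, step_none h]⟩
  · by_cases hp : i % 2 = 1
    · exact ⟨_, by rw [st_succ, step_odd h hp]⟩
    · rcases hc : (sib (st s).1 x).head? with _ | c
      · exact ⟨_, by rw [st_succ, step_even_none h hp hc]⟩
      · exact ⟨_, by rw [st_succ, step_even_some h hp hc]⟩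

theorem st_len (s : ℕ) : (st s).1.length = s + 1 := by
  induction s with
  | zero => rfl
  | succ s ih => rcases st_snoc s with ⟨v, hv⟩; rw [hv]; simp [ih]

theorem pf_bound : ∀ s k, pf (st s).1 k ≤ k ∧ (1 ≤ k → pf (st s).1 k < k) := by
  intro s
  induction s with
  | zero =>
    intro k
    cases k with
    | zero => exact ⟨le_refl 0, by omega⟩
    | succ k =>
      have : pf (st 0).1 (k+1) = 0 := by
        show ([0] : List ℕ).getD (k+1) 0 = 0
        simp [List.getD]
      omega
  | succ s ih =>
    intro k
    rcases Nat.lt_trichotomy k (s+1) with hk | hk | hk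
    · -- k ≤ s : value unchanged
      rcases st_snoc s with ⟨v, hv⟩
      have : pf (st (s+1)).1 k = pf (st s).1 k := by
        unfold pf; rw [hv]; exact getD_snoc_lt (by rw [st_len]; omega)
      rw [this]; exact ih k
    · -- k = s+1 : new value
      subst hk
      have hlen := st_len s
      have hval : ∀ v, (st (s+1)).1 = (st s).1 ++ [v] → pf (st (s+1)).1 (s+1) = v := by
        intro v hv
        unfold pf; rw [hv, ← hlen]; exact getD_snoc
      have hbound : pf (st (s+1)).1 (s+1) < s + 1 := by
        rcases h : act (s+1) (st s).1 (st s).2 with _ | ⟨i, x⟩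
        · rw [hval _ (by rw [st_succ, step_none h])]
          have := mx_lt (P := (st s).1) (b := fb (st s).2) (by rw [hlen]; omega)
          omega
        · have hx : x < s + 1 := by
            rcases act_some h with ⟨_, he, _⟩
            exact (elig_some he).2.1
          by_cases hp : i % 2 = 1
          · rw [hval _ (by rw [st_succ, step_odd h hp])]
            have := mx_lt (P := (st s).1) (b := x) (by rw [hlen]; omega)
            omega
          · rcases hc : (sib (st s).1 x).head? with _ | c
            · rw [hval _ (by rw [st_succ, step_even_none h hp hc])]
              have h1 := (ih x).1
              omega
            · rw [hval _ (by rw [st_succ, step_even_some h hp hc])]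
              have := mx_lt (P := (st s).1) (b := c) (by rw [hlen]; omega)
              omega
      exact ⟨le_of_lt hbound, fun _ => hbound⟩
    · -- k > s+1 : out of range, getD = 0
      have : pf (st (s+1)).1 k = 0 := by
        unfold pf
        rw [List.getD_eq_default]
        rw [st_len]; omega
      omega

theorem par_zero : par 0 = 0 := rfl

theorem par_le (k : ℕ) : par k ≤ k := (pf_bound k k).1

theorem par_lt {k : ℕ} (h : 1 ≤ k) : par k < k := (pf_bound k k).2 h

theorem pf_eq_par : ∀ s k, k ≤ s → pf (st s).1 k = par k := by
  intro s
  induction s with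
  | zero =>
    intro k hk
    have : k = 0 := Nat.le_zero.1 hk
    subst this; rfl
  | succ s ih =>
    intro k hk
    rcases Nat.lt_or_ge k (s+1) with h | h
    · rcases st_snoc s with ⟨v, hv⟩
      have : pf (st (s+1)).1 k = pf (st s).1 k := by
        unfold pf; rw [hv]; exact getD_snoc_lt (by rw [st_len]; omega)
      rw [this]; exact ih k (by omega)
    · have : k = s + 1 := by omega
      subst this; rfl

/-! ### The order R -/

theorem R_refl (n : ℕ) : R n n := ⟨0, rfl⟩

theorem R_trans {a b c : ℕ} (h1 : R a b) (h2 : R b c) : R a c := by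
  rcases h1 with ⟨k, hk⟩; rcases h2 with ⟨l, hl⟩
  exact ⟨k + l, by rw [Function.iterate_add_apply, hl, hk]⟩

theorem iterate_par_le (k m : ℕ) : par^[k] m ≤ m := by
  induction k with
  | zero => simp
  | succ k ih =>
    rw [Function.iterate_succ_apply']
    exact le_trans (par_le _) ih

theorem R_le {n m : ℕ} (h : R n m) : n ≤ m := by
  rcases h with ⟨k, hk⟩; rw [← hk]; exact iterate_par_le k m

theorem R_antisymm {n m : ℕ} (h1 : R n m) (h2 : R m n) : n = m :=
  le_antisymm (R_le h1) (R_le h2)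

theorem R_par (k : ℕ) : R (par k) k := ⟨1, rfl⟩

theorem R_zero (m : ℕ) : R 0 m := by
  induction m using Nat.strong_induction_on with
  | _ m ih =>
    cases m with
    | zero => exact R_refl 0
    | succ m => exact R_trans (ih (par (m+1)) (par_lt (by omega))) (R_par (m+1))

theorem R_linear {a b m : ℕ} (h1 : R a m) (h2 : R b m) : R a b ∨ R b a := by
  rcases h1 with ⟨k, hk⟩; rcases h2 with ⟨l, hl⟩
  rcases Nat.le_total k l with h | h
  · right
    refine ⟨l - k, ?_⟩
    rw [← hk, ← Function.iterate_add_apply, Nat.sub_add_cancel h, hl]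
  · left
    refine ⟨k - l, ?_⟩
    rw [← hl, ← Function.iterate_add_apply, Nat.sub_add_cancel h, hk]

theorem R_bounded_aux : ∀ m k, ∃ k' ≤ m, par^[k'] m = par^[k] m := by
  intro m
  induction m using Nat.strong_induction_on with
  | _ m ih =>
    intro k
    cases k with
    | zero => exact ⟨0, Nat.zero_le m, rfl⟩
    | succ k =>
      cases m with
      | zero =>
        refine ⟨0, le_refl 0, ?_⟩
        have : ∀ j, par^[j] 0 = 0 := by
          intro j
          induction j with
          | zero => rfl
          | succ j ihj => rw [Function.iterate_succ_apply, par_zero, ihj]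
        rw [this, this]
      | succ m =>
        have hlt : par (m+1) < m + 1 := par_lt (by omega)
        rcases ih (par (m+1)) hlt k with ⟨k', hk', heq⟩
        refine ⟨k' + 1, by omega, ?_⟩
        rw [Function.iterate_succ_apply, Function.iterate_succ_apply, heq]

theorem R_bounded {n m : ℕ} (h : R n m) : ∃ k ≤ m, par^[k] m = n := by
  rcases h with ⟨k, hk⟩
  rcases R_bounded_aux m k with ⟨k', hk', heq⟩
  exact ⟨k', hk', by rw [heq, hk]⟩

/-! ### Semantics of rp, cone, mx, sib -/

theorem pf_iter_eq : ∀ (k s m : ℕ), m ≤ s → (pf (st s).1)^[k] m = par^[k] m := by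
  intro k
  induction k with
  | zero => intros; rfl
  | succ k ih =>
    intro s m hm
    rw [Function.iterate_succ_apply, Function.iterate_succ_apply]
    rw [pf_eq_par s m hm]
    exact ih s (par m) (le_trans (par_le m) hm)

theorem rp_iff {s n m : ℕ} (hm : m ≤ s) : rp (st s).1 n m = true ↔ R n m := by
  unfold rp
  rw [Bool.not_eq_true']
  constructor
  · intro h
    have hne : ((List.range (m+1)).filter
        (fun k => (pf (st s).1)^[k] m == n)) ≠ [] := by
      intro hnil
      rw [hnil] at h
      simp at h
    rcases List.exists_mem_of_ne_nil _ hne with ⟨k, hk⟩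
    have := List.mem_filter.1 hk
    have heq : (pf (st s).1)^[k] m = n := by simpa using this.2
    rw [pf_iter_eq k s m hm] at heq
    exact ⟨k, heq⟩
  · intro h
    rcases R_bounded h with ⟨k, hk, heq⟩
    have hmem : k ∈ (List.range (m+1)).filter (fun k => (pf (st s).1)^[k] m == n) := by
      refine List.mem_filter.2 ⟨List.mem_range.2 (by omega), ?_⟩
      simp [pf_iter_eq k s m hm, heq]
    exact List.isEmpty_eq_false_iff.mpr (List.ne_nil_of_mem hmem)

theorem rp_false_iff {s n m : ℕ} (hm : m ≤ s) : rp (st s).1 n m = false ↔ ¬ R n m := by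
  rw [← Bool.not_eq_true, not_iff_not]
  exact rp_iff hm

theorem cone_mem {s b m : ℕ} : m ∈ cone (st s).1 b ↔ m ≤ s ∧ R b m := by
  unfold cone
  rw [List.mem_filter, List.mem_range, st_len]
  constructor
  · rintro ⟨h1, h2⟩
    have hm : m ≤ s := by omega
    exact ⟨hm, (rp_iff hm).1 h2⟩
  · rintro ⟨h1, h2⟩
    exact ⟨by omega, (rp_iff h1).2 h2⟩

theorem mx_above {s b : ℕ} (hb : b ≤ s) : R b (mx (st s).1 b) ∧ mx (st s).1 b ≤ s := by
  have hmem : b ∈ cone (st s).1 b := cone_mem.2 ⟨hb, R_refl b⟩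
  have hne : cone (st s).1 b ≠ [] := fun h => by rw [h] at hmem; simp at hmem
  have := foldr_max_mem hne
  have h2 := cone_mem.1 this
  exact ⟨h2.2, h2.1⟩

theorem mx_max {s b m : ℕ} (hm : m ≤ s) (h : R b m) : m ≤ mx (st s).1 b :=
  le_foldr_max (cone_mem.2 ⟨hm, h⟩)

theorem mx_no_child {s b c : ℕ} (hb : b ≤ s) (hc : c ≤ s) (h1 : 1 ≤ c)
    (hpar : par c = mx (st s).1 b) : False := by
  have hRc : R (mx (st s).1 b) c := hpar ▸ R_par c
  have hRb : R b c := R_trans (mx_above hb).1 hRc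
  have := mx_max hc hRb
  have := par_lt h1
  omega

theorem sib_mem {s x c : ℕ} :
    c ∈ sib (st s).1 x ↔ c ≤ s ∧ c ≠ 0 ∧ c ≠ x ∧ pf (st s).1 c = pf (st s).1 x := by
  unfold sib
  rw [List.mem_filter, List.mem_range, st_len]
  constructor
  · rintro ⟨h1, h2⟩
    simp only [Bool.and_eq_true, Bool.not_eq_true', beq_eq_false_iff_ne, ne_eq,
      beq_iff_eq] at h2
    exact ⟨by omega, h2.1.1, h2.1.2, h2.2⟩
  · rintro ⟨h1, h2, h3, h4⟩
    refine ⟨by omega, ?_⟩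
    simp only [Bool.and_eq_true, Bool.not_eq_true', beq_eq_false_iff_ne, ne_eq,
      beq_iff_eq]
    exact ⟨⟨h2, h3⟩, h4⟩

/-! ### Proper ancestors and incomparability -/

theorem R_proper {b x : ℕ} (h : R b x) (hne : b ≠ x) : R b (par x) ∧ 1 ≤ x := by
  have hx : 1 ≤ x := by
    rcases Nat.eq_zero_or_pos x with rfl | h1
    · exact absurd (le_antisymm (R_le h) (Nat.zero_le b)) hne
    · exact h1
  rcases h with ⟨k, hk⟩
  cases k with
  | zero => exact absurd hk.symm hne
  | succ k =>
    refine ⟨⟨k, ?_⟩, hx⟩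
    rw [← hk, Function.iterate_succ_apply]

theorem sib_incomp {x c : ℕ} (h1 : 1 ≤ c) (h1x : 1 ≤ x) (hcx : c ≠ x)
    (hpar : par c = par x) : ¬R c x ∧ ¬R x c := by
  constructor
  · intro h
    have := (R_proper h hcx).1
    rw [← hpar] at this
    have h2 : c = par c := R_antisymm this (R_par c)
    have := par_lt h1
    omega
  · intro h
    have := (R_proper h (Ne.symm hcx)).1
    rw [hpar] at this
    have h2 : x = par x := R_antisymm this (R_par x)
    have := par_lt h1x
    omega

/-! ### Immediate successors -/

theorem immSucc_iff {n m : ℕ} : ImmSucc R n m ↔ m ≠ 0 ∧ par m = n := by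
  constructor
  · rintro ⟨hr, hne, hbet⟩
    have hm : m ≠ 0 := by
      rintro rfl
      exact hne (le_antisymm (R_le hr) (Nat.zero_le n))
    have h1 : R n (par m) := (R_proper hr hne).1
    rcases hbet (par m) h1 (R_par m) with h | h
    · exact ⟨hm, h⟩
    · have := par_lt (Nat.one_le_iff_ne_zero.2 hm)
      omega
  · rintro ⟨hm, rfl⟩
    have h1 : 1 ≤ m := Nat.one_le_iff_ne_zero.2 hm
    refine ⟨R_par m, by have := par_lt h1; omega, ?_⟩
    intro k hk1 hk2
    rcases eq_or_ne k m with rfl | hkm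
    · exact Or.inr rfl
    · exact Or.inl (R_antisymm (R_proper hk2 hkm).1 hk1)

/-! ### Bounds on stored entries -/

theorem par_succ_val {s v : ℕ} (h : (st (s+1)).1 = (st s).1 ++ [v]) : par (s+1) = v := by
  show pf (st (s+1)).1 (s+1) = v
  unfold pf
  rw [h, ← st_len s]
  exact getD_snoc

theorem ent_bound : ∀ s, ∀ t ∈ (st s).2, t.1 ≤ s ∧ t.2.1 ≤ s ∧ t.2.2 ≤ s := by
  intro s
  induction s with
  | zero => intro t ht; simp [st] at ht
  | succ s ih =>
    intro t ht
    have step3 : ∀ i x y, act (s+1) (st s).1 (st s).2 = some (i, x) →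
        (st (s+1)).2 = (st s).2.filter (fun t => decide (t.1 < i)) ++ [(i, x, y)] →
        y ≤ s + 1 → t.1 ≤ s + 1 ∧ t.2.1 ≤ s + 1 ∧ t.2.2 ≤ s + 1 := by
      intro i x y ha hL hy
      rw [hL] at ht
      rcases List.mem_append.1 ht with h | h
      · have := ih t (List.mem_of_mem_filter h)
        omega
      · have : t = (i, x, y) := by simpa using h
        subst this
        rcases act_some ha with ⟨hi, he, _⟩
        have hx := (elig_some he).2.1
        refine ⟨?_, ?_, ?_⟩
        · show i ≤ s + 1; omega
        · show x ≤ s + 1; omega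
        · exact hy
    rcases h : act (s+1) (st s).1 (st s).2 with _ | ⟨i, x⟩
    · have hL : (st (s+1)).2 = (st s).2 := by rw [st_succ, step_none h]
      rw [hL] at ht
      have := ih t ht
      omega
    · by_cases hp : i % 2 = 1
      · refine step3 i x x h ?_ ?_
        · rw [st_succ, step_odd h hp]
        · rcases act_some h with ⟨_, he, _⟩
          have := (elig_some he).2.1
          omega
      · rcases hc : (sib (st s).1 x).head? with _ | c
        · refine step3 i x (st s).1.length h ?_ ?_
          · rw [st_succ, step_even_none h hp hc]
          · rw [st_len]
        · refine step3 i x c h ?_ ?_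
          · rw [st_succ, step_even_some h hp hc]
          · have := (sib_mem.1 (List.mem_of_mem_head? hc)).1
            omega

theorem fb_le_of {L : List Ent} {s : ℕ} (h : ∀ t ∈ L, t.2.2 ≤ s) : fb L ≤ s := by
  unfold fb
  cases hL : L.reverse with
  | nil => simpa using Nat.zero_le s
  | cons t rest =>
    have ht : t ∈ L := List.mem_reverse.1 (hL ▸ (List.mem_cons_self (a := t) (l := rest)))
    simpa using h t ht

theorem fb_le (s : ℕ) : fb (st s).2 ≤ s := fb_le_of (fun t ht => (ent_bound s t ht).2.2)

theorem bs_le (s i : ℕ) : bs (st s).2 i ≤ s :=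
  fb_le_of (fun t ht => (ent_bound s t (List.mem_of_mem_filter ht)).2.2)

/-! ### Each node has at most two children -/

theorem new_parent_old_count (s : ℕ) :
    ∃ x₀, ∀ c ≤ s, 1 ≤ c → par c = par (s+1) → c = x₀ := by
  rcases h : act (s+1) (st s).1 (st s).2 with _ | ⟨i, x⟩
  · refine ⟨0, fun c hc h1 hp => ?_⟩
    have hv := par_succ_val (by rw [st_succ, step_none h])
    exact absurd (hp.trans hv) (fun hh => mx_no_child (fb_le s) hc h1 hh)
  · have hx : x ≤ s := by
      rcases act_some h with ⟨_, he, _⟩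
      have := (elig_some he).2.1
      omega
    by_cases hp : i % 2 = 1
    · refine ⟨0, fun c hc h1 hpar => ?_⟩
      have hv := par_succ_val (by rw [st_succ, step_odd h hp])
      exact absurd (hpar.trans hv) (fun hh => mx_no_child hx hc h1 hh)
    · rcases hc : (sib (st s).1 x).head? with _ | c'
      · -- fresh child of the parent of x : old children of (par x) are only x
        refine ⟨x, fun c hcs h1 hpar => ?_⟩
        have hv := par_succ_val (by rw [st_succ, step_even_none h hp hc])
        have hpx : par (s+1) = par x := by
          rw [hv]; exact pf_eq_par s x hx
        by_contra hne
        have hmem : c ∈ sib (st s).1 x := by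
          refine sib_mem.2 ⟨hcs, by omega, hne, ?_⟩
          rw [pf_eq_par s c hcs, pf_eq_par s x hx, ← hpx, hpar]
        rw [List.head?_eq_none_iff.1 hc] at hmem
        simp at hmem
      · refine ⟨0, fun c hcs h1 hpar => ?_⟩
        have hv := par_succ_val (by rw [st_succ, step_even_some h hp hc])
        have hc' : c' ≤ s := (sib_mem.1 (List.mem_of_mem_head? hc)).1
        exact absurd (hpar.trans hv) (fun hh => mx_no_child hc' hcs h1 hh)

theorem child_bound_all : ∀ s n, ((Finset.range (s+1)).filter
    (fun c => 1 ≤ c ∧ par c = n)).card ≤ 2 := by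
  intro s
  induction s with
  | zero =>
    intro n
    have : (Finset.range 1).filter (fun c => 1 ≤ c ∧ par c = n) = ∅ := by
      ext c
      simp only [Finset.mem_filter, Finset.mem_range, Finset.notMem_empty, iff_false]
      omega
    rw [this]; simp
  | succ s ih =>
    intro n
    rw [Finset.range_add_one, Finset.filter_insert]
    by_cases hcond : 1 ≤ s + 1 ∧ par (s+1) = n
    · rw [if_pos hcond]
      refine le_trans (Finset.card_insert_le _ _) ?_
      have h1 : ((Finset.range (s+1)).filter (fun c => 1 ≤ c ∧ par c = n)).card ≤ 1 := by
        rcases new_parent_old_count s with ⟨x₀, hx₀⟩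
        refine le_trans (Finset.card_le_card (fun c hcmem => ?_)) (Finset.card_singleton x₀).le
        rcases Finset.mem_filter.1 hcmem with ⟨hcr, h1c, hpc⟩
        rw [Finset.mem_singleton]
        exact hx₀ c (by have := Finset.mem_range.1 hcr; omega) h1c (by rw [hpc, hcond.2])
      omega
    · rw [if_neg hcond]
      exact ih n

theorem children_finset_bound (n : ℕ) (F : Finset ℕ)
    (hF : ∀ c ∈ F, c ≠ 0 ∧ par c = n) : F.card ≤ 2 := by
  have hsub : F ⊆ (Finset.range (F.sup id + 1)).filter (fun c => 1 ≤ c ∧ par c = n) := by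
    intro c hc
    rcases hF c hc with ⟨h0, hp⟩
    refine Finset.mem_filter.2 ⟨Finset.mem_range.2 ?_, by omega, hp⟩
    have : c ≤ F.sup id := Finset.le_sup (f := id) hc
    omega
  exact le_trans (Finset.card_le_card hsub) (child_bound_all _ n)

/-! ### The main invariant -/

def Pent (a b : Ent) : Prop := a.1 < b.1 ∧ R a.2.2 b.2.2

def Good (t : Ent) : Prop :=
  (∃ k, (evaln k (Denumerable.ofNat Code (t.1/2)) t.2.1).isSome = true) ∧
  (t.1 % 2 = 1 → t.2.2 = t.2.1) ∧
  (t.1 % 2 ≠ 1 → ¬R t.2.1 t.2.2 ∧ ¬R t.2.2 t.2.1)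

theorem fb_snoc {L : List Ent} {t : Ent} : fb (L ++ [t]) = t.2.2 := by
  unfold fb; simp

theorem pairwise_R_fb {L : List Ent} (hp : L.Pairwise (fun a b => R a.2.2 b.2.2)) :
    ∀ t ∈ L, R t.2.2 (fb L) := by
  induction L using List.reverseRecOn with
  | nil => intro t ht; simp at ht
  | append_singleton L t₀ ih =>
    intro t ht
    rw [fb_snoc]
    rcases List.mem_append.1 ht with h | h
    · have := (List.pairwise_append.1 hp).2.2
      exact this t h t₀ (List.mem_singleton_self _)
    · have : t = t₀ := by simpa using h
      subst this; exact R_refl _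

theorem wOK_true {s : ℕ} {P : List ℕ} {L : List Ent} {i x : ℕ} :
    wOK s P L i x = true ↔
      (evaln s (Denumerable.ofNat Code (i/2)) x).isSome = true ∧
      rp P (bs L i) x = true ∧ (i % 2 = 1 ∨ x ≠ bs L i) := by
  unfold wOK
  simp only [Bool.and_eq_true, Bool.or_eq_true, beq_iff_eq, Bool.not_eq_true',
    beq_eq_false_iff_ne, ne_eq]
  tauto

theorem inv (s : ℕ) : (st s).2.Pairwise Pent ∧ (∀ t ∈ (st s).2, Good t) ∧
    (∀ t ∈ (st s).2, R t.2.2 s) := by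
  induction s with
  | zero => refine ⟨by constructor, ?_, ?_⟩ <;> intro t ht <;> simp [st] at ht
  | succ s ih =>
    obtain ⟨ihp, ihg, ihn⟩ := ih
    rcases h : act (s+1) (st s).1 (st s).2 with _ | ⟨i, x⟩
    · have hL : (st (s+1)).2 = (st s).2 := by rw [st_succ, step_none h]
      have hq : par (s+1) = mx (st s).1 (fb (st s).2) :=
        par_succ_val (by rw [st_succ, step_none h])
      refine ⟨hL ▸ ihp, hL ▸ ihg, ?_⟩
      intro t ht
      rw [hL] at ht
      have h1 : R t.2.2 (fb (st s).2) :=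
        pairwise_R_fb (ihp.imp (fun hab => hab.2)) t ht
      have h2 : R (fb (st s).2) (par (s+1)) := hq ▸ (mx_above (fb_le s)).1
      exact R_trans (R_trans h1 h2) (R_par (s+1))
    · -- someone acts
      rcases act_some h with ⟨hi, he, hmin⟩
      obtain ⟨hIdx, hxlt, hwOK⟩ := elig_some he
      have hxs : x ≤ s := by omega
      rcases wOK_true.1 hwOK with ⟨hev, hrp, hpar⟩
      set b := bs (st s).2 i with hb
      have hRbx : R b x := (rp_iff hxs).1 hrp
      have hFsub : ∀ t ∈ (st s).2.filter (fun t => decide (t.1 < i)), t ∈ (st s).2 :=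
        fun t ht => List.mem_of_mem_filter ht
      have hFpair : ((st s).2.filter (fun t => decide (t.1 < i))).Pairwise Pent :=
        ihp.sublist List.filter_sublist
      have hFfb : ∀ t ∈ (st s).2.filter (fun t => decide (t.1 < i)), R t.2.2 b :=
        pairwise_R_fb (hFpair.imp (fun hab => hab.2))
      have hFidx : ∀ t ∈ (st s).2.filter (fun t => decide (t.1 < i)), t.1 < i := by
        intro t ht
        have := List.of_mem_filter ht
        simpa using this
      -- generic continuation
      have main : ∀ y : ℕ, R b y → R y (s+1) →
          (i % 2 = 1 → y = x) → (i % 2 ≠ 1 → ¬R x y ∧ ¬R y x) →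
          (st (s+1)).2 = (st s).2.filter (fun t => decide (t.1 < i)) ++ [(i, x, y)] →
          ((st (s+1)).2.Pairwise Pent ∧ (∀ t ∈ (st (s+1)).2, Good t) ∧
            (∀ t ∈ (st (s+1)).2, R t.2.2 (s+1))) := by
        intro y hby hys hodd heven hL
        rw [hL]
        refine ⟨?_, ?_, ?_⟩
        · rw [List.pairwise_append]
          refine ⟨hFpair, List.pairwise_singleton _ _, ?_⟩
          intro a ha t' ht'
          have : t' = (i, x, y) := by simpa using ht'
          subst this
          exact ⟨hFidx a ha, R_trans (hFfb a ha) hby⟩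
        · intro t ht
          rcases List.mem_append.1 ht with hmem | hmem
          · exact ihg t (hFsub t hmem)
          · have : t = (i, x, y) := by simpa using hmem
            subst this
            refine ⟨⟨s+1, hev⟩, fun hp => hodd hp ▸ rfl, heven⟩
        · intro t ht
          rcases List.mem_append.1 ht with hmem | hmem
          · exact R_trans (R_trans (hFfb t hmem) hby) hys
          · have : t = (i, x, y) := by simpa using hmem
            subst this
            exact hys
      by_cases hp : i % 2 = 1
      · have hL : (st (s+1)).2 =
            (st s).2.filter (fun t => decide (t.1 < i)) ++ [(i, x, x)] := by
          rw [st_succ, step_odd h hp]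
        have hq : par (s+1) = mx (st s).1 x :=
          par_succ_val (by rw [st_succ, step_odd h hp])
        refine main x hRbx ?_ (fun _ => rfl) (fun hc => absurd hp hc) hL
        exact R_trans (R_trans (hq ▸ (mx_above hxs).1) (hq ▸ R_refl _)) (R_par (s+1))
      · have hxb : x ≠ b := by
          rcases hpar with h' | h'
          · exact absurd h' hp
          · exact h'
        have hx1 : 1 ≤ x := (R_proper hRbx (Ne.symm hxb)).2
        have hbpx : R b (par x) := (R_proper hRbx (Ne.symm hxb)).1
        rcases hc : (sib (st s).1 x).head? with _ | c
        · -- fresh sibling y = s+1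
          have hL : (st (s+1)).2 = (st s).2.filter (fun t => decide (t.1 < i)) ++
              [(i, x, (st s).1.length)] := by
            rw [st_succ, step_even_none h hp hc]
          have hq : par (s+1) = par x := by
            have := par_succ_val (by rw [st_succ, step_even_none h hp hc])
            rw [this]; exact pf_eq_par s x hxs
          rw [st_len] at hL
          have hinc := sib_incomp (c := s+1) (by omega) hx1 (by omega) hq
          refine main (s+1) ?_ (R_refl _) (fun hp' => absurd hp' hp)
            (fun _ => ⟨hinc.2, hinc.1⟩) hL
          exact R_trans hbpx (hq ▸ R_par (s+1))
        · -- existing sibling c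
          have hcs := sib_mem.1 (List.mem_of_mem_head? hc)
          obtain ⟨hcle, hc0, hcx, hcpf⟩ := hcs
          have hcparx : par c = par x := by
            rw [← pf_eq_par s c hcle, ← pf_eq_par s x hxs]; exact hcpf
          have hL : (st (s+1)).2 = (st s).2.filter (fun t => decide (t.1 < i)) ++
              [(i, x, c)] := by
            rw [st_succ, step_even_some h hp hc]
          have hq : par (s+1) = mx (st s).1 c :=
            par_succ_val (by rw [st_succ, step_even_some h hp hc])
          have hinc := sib_incomp (c := c) (Nat.one_le_iff_ne_zero.2 hc0) hx1 hcx hcparx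
          refine main c ?_ ?_ (fun hp' => absurd hp' hp) (fun _ => ⟨hinc.2, hinc.1⟩) hL
          · exact R_trans hbpx (hcparx ▸ R_par c)
          · exact R_trans (hq ▸ (mx_above hcle).1) (R_par (s+1))
  

/-! ### Actions and persistence -/

/-- The action taken during the step from `st u` to `st (u+1)`. -/
def ActI (u : ℕ) : Option (ℕ × ℕ) := act (u+1) (st u).1 (st u).2

theorem hasIdx_false_iff {L : List Ent} {i : ℕ} :
    hasIdx L i = false ↔ ∀ t ∈ L, t.1 ≠ i := by
  unfold hasIdx
  rw [Bool.not_eq_false']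
  rw [List.isEmpty_iff, List.filter_eq_nil_iff]
  simp

theorem act_no_idx {s : ℕ} {P : List ℕ} {L : List Ent} {i x : ℕ}
    (h : act s P L = some (i, x)) : ∀ t ∈ L, t.1 ≠ i := by
  rcases act_some h with ⟨_, he, _⟩
  exact hasIdx_false_iff.1 (elig_some he).1

theorem actI_none_L {u : ℕ} (h : ActI u = none) : (st (u+1)).2 = (st u).2 := by
  rw [st_succ, step_none h]

theorem actI_some_L {u i x : ℕ} (h : ActI u = some (i, x)) :
    ∃ y, (st (u+1)).2 = (st u).2.filter (fun t => decide (t.1 < i)) ++ [(i, x, y)] := by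
  by_cases hp : i % 2 = 1
  · exact ⟨x, by rw [st_succ, step_odd h hp]⟩
  · rcases hc : (sib (st u).1 x).head? with _ | c
    · exact ⟨(st u).1.length, by rw [st_succ, step_even_none h hp hc]⟩
    · exact ⟨c, by rw [st_succ, step_even_some h hp hc]⟩

theorem perm {i s₀ : ℕ} (hs₀ : ∀ u ≥ s₀, ∀ j < i, ∀ x, ActI u ≠ some (j, x))
    {t : Ent} {w : ℕ} (hti : t.1 = i) (hw : w ≥ s₀) (ht : t ∈ (st w).2) :
    ∀ w' ≥ w, t ∈ (st w').2 := by
  intro w' hw'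
  induction w', hw' using Nat.le_induction with
  | base => exact ht
  | succ v hv ih =>
    rcases hA : ActI v with _ | ⟨j, x⟩
    · rw [actI_none_L hA]; exact ih
    · have hji : j ≠ i := fun hji => act_no_idx hA t ih (hji ▸ hti)
      have hjlt : ¬ j < i := fun hlt => hs₀ v (le_trans hw hv) j hlt x hA
      rcases actI_some_L hA with ⟨y, hL⟩
      rw [hL]
      refine List.mem_append_left _ (List.mem_filter.2 ⟨ih, ?_⟩)
      simp only [decide_eq_true_eq]
      omega

theorem filter_stable {i s₀ : ℕ}
    (hs₀ : ∀ u ≥ s₀, ∀ j < i, ∀ x, ActI u ≠ some (j, x))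
    (hB : ∀ u ≥ s₀, ∀ x, ActI u ≠ some (i, x)) :
    ∀ u ≥ s₀, (st u).2.filter (fun t => decide (t.1 < i)) =
      (st s₀).2.filter (fun t => decide (t.1 < i)) := by
  intro u hu
  induction u, hu using Nat.le_induction with
  | base => rfl
  | succ v hv ih =>
    rcases hA : ActI v with _ | ⟨j, x⟩
    · rw [actI_none_L hA]; exact ih
    · have hji : j ≠ i := fun hji => hB v hv x (hji ▸ hA)
      have hjlt : ¬ j < i := fun hlt => hs₀ v hv j hlt x hA
      rcases actI_some_L hA with ⟨y, hL⟩
      rw [hL, List.filter_append]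
      have h1 : ([( (j : ℕ), (x : ℕ), y)] : List Ent).filter
          (fun t => decide (t.1 < i)) = [] := by
        simp only [List.filter, decide_eq_true_eq]
        have : ¬ j < i := by omega
        simp [this]
      rw [h1, List.append_nil, List.filter_filter]
      rw [← ih]
      apply List.filter_congr
      intro a _
      by_cases hai : a.1 < i
      · have : a.1 < j := by omega
        simp [hai, this]
      · simp [hai]

theorem act_creates {u i x : ℕ} (h : ActI u = some (i, x)) :
    ∃ t ∈ (st (u+1)).2, t.1 = i ∧ t.2.1 = x := by
  rcases actI_some_L h with ⟨y, hL⟩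
  exact ⟨(i, x, y), by rw [hL]; exact List.mem_append_right _ (by simp), rfl, rfl⟩

theorem no_low_acts : ∀ i, ∃ s₀, ∀ u ≥ s₀, ∀ j < i, ∀ x, ActI u ≠ some (j, x) := by
  intro i
  induction i with
  | zero => exact ⟨0, fun u _ j hj x => by omega⟩
  | succ i ih =>
    rcases ih with ⟨s₀, hs₀⟩
    by_cases hA : ∃ u ≥ s₀, ∃ x, ActI u = some (i, x)
    · rcases hA with ⟨u, hu, x, hux⟩
      rcases act_creates hux with ⟨t, htmem, hti, _⟩
      refine ⟨u + 1, fun v hv j hj y hact => ?_⟩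
      rcases Nat.lt_or_ge j i with hji | hji
      · exact hs₀ v (by omega) j hji y hact
      · have : j = i := by omega
        subst this
        have htv : t ∈ (st v).2 := perm hs₀ hti (by omega) htmem v hv
        exact act_no_idx hact t htv hti
    · push_neg at hA
      refine ⟨s₀, fun v hv j hj y hact => ?_⟩
      rcases Nat.lt_or_ge j i with hji | hji
      · exact hs₀ v hv j hji y hact
      · have : j = i := by omega
        subst this
        exact hA v hv y hact

/-! ### Meeting the requirements -/

theorem fb_cases (L : List Ent) : fb L = 0 ∨ ∃ t ∈ L, fb L = t.2.2 := by
  unfold fb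
  cases hL : L.reverse with
  | nil => left; rfl
  | cons t rest =>
    right
    exact ⟨t, List.mem_reverse.1 (hL ▸ (List.mem_cons_self (a := t) (l := rest))), by simp⟩

theorem requirement_met (i : ℕ)
    (hW : {n : ℕ | (eval (Denumerable.ofNat Code (i/2)) n).Dom}.Infinite) :
    ∃ x z : ℕ, (eval (Denumerable.ofNat Code (i/2)) x).Dom ∧
      (eval (Denumerable.ofNat Code (i/2)) z).Dom ∧ x ≠ z ∧
      (i % 2 = 1 → R x z) ∧ (i % 2 ≠ 1 → ¬R x z ∧ ¬R z x) := by
  obtain ⟨s₀, hs₀⟩ := no_low_acts i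
  have hA : ∃ w ≥ s₀, ∃ t ∈ (st w).2, t.1 = i := by
    by_contra hB
    push_neg at hB
    have hBact : ∀ u ≥ s₀, ∀ x, ActI u ≠ some (i, x) := by
      intro u hu x hact
      rcases act_creates hact with ⟨t, htmem, hti, _⟩
      exact hB (u+1) (by omega) t htmem hti
    have hstab := filter_stable hs₀ hBact
    set F := (st s₀).2.filter (fun t => decide (t.1 < i)) with hF
    set b := fb F with hbdef
    have hbs : ∀ u ≥ s₀, bs (st u).2 i = b := by
      intro u hu
      show fb ((st u).2.filter (fun t => decide (t.1 < i))) = b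
      rw [hstab u hu]
    have hble : b ≤ s₀ :=
      fb_le_of (fun t ht => (ent_bound s₀ t (List.mem_of_mem_filter ht)).2.2)
    have hRbz : ∀ z ≥ s₀, R b z := by
      intro z hz
      rcases fb_cases F with h0 | ⟨t, htF, hteq⟩
      · rw [hbdef, h0]; exact R_zero z
      · have htz : t ∈ (st z).2 := by
          have : t ∈ (st z).2.filter (fun t => decide (t.1 < i)) := by
            rw [hstab z hz]; exact htF
          exact List.mem_of_mem_filter this
        rw [hbdef, hteq]
        exact (inv z).2.2 t htz
    obtain ⟨z, hzW, hzgt⟩ := hW.exists_gt (max s₀ b)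
    have hzs : z > s₀ := lt_of_le_of_lt (le_max_left _ _) hzgt
    have hzb : z > b := lt_of_le_of_lt (le_max_right _ _) hzgt
    obtain ⟨v, hv⟩ := Part.dom_iff_mem.1 hzW
    obtain ⟨k, hk⟩ := evaln_complete.1 hv
    set u := max (max k z) (max s₀ i) with hu
    have hus : u ≥ s₀ := le_trans (le_max_left _ _) (le_max_right _ _)
    have hui : i < u + 1 := by
      have : i ≤ u := le_trans (le_max_right _ _) (le_max_right _ _)
      omega
    have huz : z ≤ u := le_trans (le_max_right _ _) (le_max_left _ _)
    have huk : k ≤ u + 1 := by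
      have : k ≤ u := le_trans (le_max_left _ _) (le_max_left _ _)
      omega
    have hwOK : wOK (u+1) (st u).1 (st u).2 i z = true := by
      refine wOK_true.2 ⟨?_, ?_, Or.inr ?_⟩
      · have := evaln_mono huk hk
        rw [this]; rfl
      · refine (rp_iff huz).2 ?_
        rw [hbs u hus]
        exact hRbz z (by omega)
      · rw [hbs u hus]; omega
    have helig : ∃ x', elig (u+1) (st u).1 (st u).2 i = some x' := by
      unfold elig
      have hhi : hasIdx (st u).2 i = false :=
        hasIdx_false_iff.2 (hB u hus)
      rw [hhi]
      have hmem : z ∈ (List.range (u+1)).filter (wOK (u+1) (st u).1 (st u).2 i) :=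
        List.mem_filter.2 ⟨List.mem_range.2 (by omega), hwOK⟩
      cases hhd : ((List.range (u+1)).filter (wOK (u+1) (st u).1 (st u).2 i)).head? with
      | none =>
        rw [List.head?_eq_none_iff.1 hhd] at hmem
        simp at hmem
      | some x' => exact ⟨x', by simp [hhd]⟩
    obtain ⟨x', hex'⟩ := helig
    obtain ⟨i', x'', hact, hile⟩ := act_of_elig hex' hui
    rcases Nat.lt_or_ge i' i with hlt | hge
    · exact hs₀ u hus i' hlt x'' hact
    · have : i' = i := by omega
      subst this
      exact hBact u hus x'' hact
  obtain ⟨w, hw, t, htmem, hti⟩ := hA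
  have hperm := perm hs₀ hti hw htmem
  have hgood := (inv w).2.1 t htmem
  have hxW : (eval (Denumerable.ofNat Code (i/2)) t.2.1).Dom := by
    obtain ⟨k, hk⟩ := hgood.1
    rw [hti] at hk
    obtain ⟨v, hv⟩ := Option.isSome_iff_exists.1 hk
    exact Part.dom_iff_mem.2 ⟨v, evaln_sound hv⟩
  obtain ⟨z, hzW, hzgt⟩ := hW.exists_gt (max w t.2.1)
  have hzw : z ≥ w := le_of_lt (lt_of_le_of_lt (le_max_left _ _) hzgt)
  have hzx : t.2.1 ≠ z := by
    have : t.2.1 < z := lt_of_le_of_lt (le_max_right _ _) hzgt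
    omega
  have htz : t ∈ (st z).2 := hperm z hzw
  have hRyz : R t.2.2 z := (inv z).2.2 t htz
  refine ⟨t.2.1, z, hxW, hzW, hzx, ?_, ?_⟩
  · intro hp
    have := hgood.2.1 (hti ▸ hp)
    rw [← this]
    exact hRyz
  · intro hp
    obtain ⟨hnxy, hnyx⟩ := hgood.2.2 (by rw [hti]; exact hp)
    constructor
    · intro hxz
      rcases R_linear hxz hRyz with h' | h'
      · exact hnxy h'
      · exact hnyx h'
    · intro hzx'
      exact hnyx (R_trans hRyz hzx')

/-! ### Final pieces -/

theorem R_computable : ComputablePred (fun p : ℕ × ℕ => R p.1 p.2) := by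
  refine ComputablePred.computable_iff.2
    ⟨fun p : ℕ × ℕ => rp (st p.2).1 p.1 p.2, pr_Rdec.to_comp, ?_⟩
  funext p
  exact propext (rp_iff (le_refl p.2)).symm

theorem re_code {C : Set ℕ} (h : REPred (· ∈ C)) :
    ∃ c : Code, ∀ n, n ∈ C ↔ (eval c n).Dom := by
  unfold REPred at h
  have h2 : Partrec fun a : ℕ =>
      (Part.assert (a ∈ C) fun _ => Part.some ()).map fun _ => (0 : ℕ) :=
    h.map ((Computable.const 0).comp Computable.fst).to₂
  obtain ⟨c, hc⟩ := exists_code.1 (Partrec.nat_iff.1 h2)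
  refine ⟨c, fun n => ?_⟩
  rw [hc]
  constructor
  · intro hn
    exact ⟨hn, trivial⟩
  · rintro ⟨hn, -⟩
    exact hn

theorem no_ce_chain : ¬ ∃ C : Set ℕ, REPred (· ∈ C) ∧ C.Infinite ∧ IsChain R C := by
  rintro ⟨C, hre, hinf, hchain⟩
  obtain ⟨c, hc⟩ := re_code hre
  set i := 2 * Encodable.encode c with hi
  have hdiv : i / 2 = Encodable.encode c := by omega
  have hcode : Denumerable.ofNat Code (i/2) = c := by
    rw [hdiv]; exact Denumerable.ofNat_encode c
  have hWinf : {n : ℕ | (eval (Denumerable.ofNat Code (i/2)) n).Dom}.Infinite := by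
    rw [hcode]
    have hset : {n : ℕ | (eval c n).Dom} = C := by
      ext n; exact (hc n).symm
    rw [hset]; exact hinf
  obtain ⟨x, z, hx, hz, hne, _, heven⟩ := requirement_met i hWinf
  rw [hcode] at hx hz
  have hxC : x ∈ C := (hc x).2 hx
  have hzC : z ∈ C := (hc z).2 hz
  have hp : i % 2 ≠ 1 := by omega
  obtain ⟨h1, h2⟩ := heven hp
  rcases hchain hxC hzC hne with h' | h'
  · exact h1 h'
  · exact h2 h'

theorem no_ce_antichain : ¬ ∃ C : Set ℕ, REPred (· ∈ C) ∧ C.Infinite ∧ IsAntichain R C := by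
  rintro ⟨C, hre, hinf, hanti⟩
  obtain ⟨c, hc⟩ := re_code hre
  set i := 2 * Encodable.encode c + 1 with hi
  have hdiv : i / 2 = Encodable.encode c := by omega
  have hcode : Denumerable.ofNat Code (i/2) = c := by
    rw [hdiv]; exact Denumerable.ofNat_encode c
  have hWinf : {n : ℕ | (eval (Denumerable.ofNat Code (i/2)) n).Dom}.Infinite := by
    rw [hcode]
    have hset : {n : ℕ | (eval c n).Dom} = C := by
      ext n; exact (hc n).symm
    rw [hset]; exact hinf
  obtain ⟨x, z, hx, hz, hne, hodd, _⟩ := requirement_met i hWinf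
  rw [hcode] at hx hz
  have hxC : x ∈ C := (hc x).2 hx
  have hzC : z ∈ C := (hc z).2 hz
  have hp : i % 2 = 1 := by omega
  exact hanti hxC hzC hne (hodd hp)

theorem immSucc_finite_bound (n : ℕ) :
    {m | ImmSucc R n m}.Finite ∧ {m | ImmSucc R n m}.ncard ≤ 2 := by
  have hSeq : {m | ImmSucc R n m} = {m | m ≠ 0 ∧ par m = n} := by
    ext m; exact immSucc_iff
  rw [hSeq]
  have hfin : {m | m ≠ 0 ∧ par m = n}.Finite := by
    by_contra hinf
    have hinf' : {m | m ≠ 0 ∧ par m = n}.Infinite := hinf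
    obtain ⟨F, hFsub, hcard⟩ := hinf'.exists_subset_card_eq 3
    have := children_finset_bound n F (fun c hc => hFsub hc)
    omega
  refine ⟨hfin, ?_⟩
  rw [Set.ncard_eq_toFinset_card _ hfin]
  exact children_finset_bound n _ (fun c hc => (Set.Finite.mem_toFinset hfin).1 hc)

end S17

/-- There is an infinite, binary branching computable tree (with domain
ℕ) that has no infinite computably enumerable chain and no infinite computably
enumerable antichain. -/
theorem stmt17 : ∃ r : ℕ → ℕ → Prop,
    ComputablePred (fun p : ℕ × ℕ => r p.1 p.2) ∧
    (∀ n, r n n) ∧ (∀ n m, r n m → r m n → n = m) ∧ (∀ n m k, r n m → r m k → r n k) ∧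
    (∃ ρ, ∀ n, r ρ n) ∧
    (∀ n, {m | r m n}.Finite ∧ ∀ a b, r a n → r b n → r a b ∨ r b a) ∧
    (∀ n, {m | ImmSucc r n m}.Finite ∧ {m | ImmSucc r n m}.ncard ≤ 2) ∧
    (¬ ∃ C : Set ℕ, REPred (· ∈ C) ∧ C.Infinite ∧ IsChain r C) ∧
    (¬ ∃ C : Set ℕ, REPred (· ∈ C) ∧ C.Infinite ∧ IsAntichain r C) := by
  refine ⟨S17.R, S17.R_computable, S17.R_refl, fun n m => S17.R_antisymm,
    fun n m k => S17.R_trans, ⟨0, S17.R_zero⟩, ?_, S17.immSucc_finite_bound,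
    S17.no_ce_chain, S17.no_ce_antichain⟩
  intro n
  exact ⟨Set.Finite.subset (Set.finite_Iic n) (fun m hm => S17.R_le hm),
    fun a b ha hb => S17.R_linear ha hb⟩
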